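/- arXiv:1811.06810 — 4 statements merged into one kernel-verified Lean document; each statement's English description precedes it below -/
import Mathlib

section
/- Let R be a join-semilattice with at least two elements, X a type, and ε a multi-valued selection function on X. Then ε is witnessing if and only if for every type Y, every multi-valued selection function δ on Y, and every q : X × Y → R, one has (ε ⊗ δ)(q) ⊆ Rat(q, ε, δ). -/
universe u

/-- A multi-valued selection function on `X` with outcomes in `R`:
a map `(X → R) → Finset X` whose values are all nonempty. -/
structure Sel (R X : Type u) [SemilatticeSup R] : Type u where
  fn : (X → R) → Finset X
  ne : ∀ k, (fn k).Nonempty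

variable {R : Type u} [SemilatticeSup R]

/-- A selection function is witnessing if whenever `x` is selected in the context
obtained by taking pointwise joins over an indexing function `I`, there is a choice
function `p` for `I` in whose induced context `x` is also selected. -/
def Witnessing {X : Type u} (ε : Sel R X) : Prop :=
  ∀ (I : X → Finset (X → R)) (hI : ∀ x, (I x).Nonempty) (x : X),
    x ∈ ε.fn (fun x' => (I x').sup' (hI x') (fun P => P x')) →
      ∃ p : X → X → R, (∀ x', p x' ∈ I x') ∧ x ∈ ε.fn (fun x' => p x' x')

/-- A selection function is upwards closed if whenever `x` is selected in the context
induced by a choice function `p` for an indexing function `I`, then `x` is also selected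
in the context obtained by taking pointwise joins over `I`. -/
def UpwardsClosed {X : Type u} (ε : Sel R X) : Prop :=
  ∀ (I : X → Finset (X → R)) (hI : ∀ x, (I x).Nonempty) (p : X → X → R),
    (∀ x', p x' ∈ I x') → ∀ x, x ∈ ε.fn (fun x' => p x' x') →
      x ∈ ε.fn (fun x' => (I x').sup' (hI x') (fun P => P x'))

/-- The product of selection functions. -/
def Sel.prod {X Y : Type u} (ε : Sel R X) (δ : Sel R Y) : Sel R (X × Y) where
  fn q :=
    ((ε.fn (fun x => (δ.fn (fun y => q (x, y))).sup' (δ.ne _) (fun y => q (x, y)))).sigma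
      (fun x => δ.fn (fun y => q (x, y)))).map
      ⟨fun p => (p.1, p.2), fun a b h => by
        cases a; cases b
        simp only [Prod.mk.injEq] at h
        obtain ⟨h1, h2⟩ := h
        subst h1; subst h2; rfl⟩
  ne q := by
    obtain ⟨x, hx⟩ := ε.ne (fun x => (δ.fn (fun y => q (x, y))).sup' (δ.ne _) (fun y => q (x, y)))
    obtain ⟨y, hy⟩ := δ.ne (fun y => q (x, y))
    exact ⟨(x, y), Finset.mem_map.2 ⟨⟨x, y⟩, Finset.mem_sigma.mpr ⟨hx, hy⟩, rfl⟩⟩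

/-- A strategy profile `(σ₁, σ₂)` is rational. -/
def IsRational {X Y : Type u} (ε : Sel R X) (δ : Sel R Y) (q : X × Y → R)
    (σ₁ : X) (σ₂ : X → Y) : Prop :=
  (∃ yf : X → Y, (∀ x, yf x ∈ δ.fn (fun y' => q (x, y'))) ∧
      σ₁ ∈ ε.fn (fun x => q (x, yf x))) ∧
  ∀ x, σ₂ x ∈ δ.fn (fun y' => q (x, y'))

/-- The set of rational plays. -/
def RatPlays {X Y : Type u} (ε : Sel R X) (δ : Sel R Y) (q : X × Y → R) : Set (X × Y) :=
  {p | ∃ σ₁ σ₂, IsRational ε δ q σ₁ σ₂ ∧ p = (σ₁, σ₂ σ₁)}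

/-- Subgame perfect strategy profile. -/
def SubgamePerfect {X Y : Type u} (ε : Sel R X) (δ : Sel R Y) (q : X × Y → R)
    (σ₁ : X) (σ₂ : X → Y) : Prop :=
  σ₁ ∈ ε.fn (fun x => q (x, σ₂ x)) ∧ ∀ x, σ₂ x ∈ δ.fn (fun y => q (x, y))

/-- The set of subgame perfect plays. -/
def SPPlays {X Y : Type u} (ε : Sel R X) (δ : Sel R Y) (q : X × Y → R) : Set (X × Y) :=
  {p | ∃ σ₁ σ₂, SubgamePerfect ε δ q σ₁ σ₂ ∧ p = (σ₁, σ₂ σ₁)}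


section Aux

variable {R : Type u} [SemilatticeSup R]

lemma sup'_eq_of_seteq {α : Type u} {s t : Finset α} (h : s = t) (hs : s.Nonempty)
    (ht : t.Nonempty) (f : α → R) : s.sup' hs f = t.sup' ht f := by subst h; rfl

lemma mem_prod_iff {X Y : Type u} (ε : Sel R X) (δ : Sel R Y) (q : X × Y → R) (x : X) (y : Y) :
    (x, y) ∈ (ε.prod δ).fn q ↔
      x ∈ ε.fn (fun x' => (δ.fn (fun y'' => q (x', y''))).sup' (δ.ne _) (fun y' => q (x', y'))) ∧
      y ∈ δ.fn (fun y' => q (x, y')) := by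
  constructor
  · intro h
    rcases Finset.mem_map.mp h with ⟨⟨a, b⟩, hm, heq⟩
    obtain ⟨rfl, rfl⟩ := heq
    exact Finset.mem_sigma.mp hm
  · intro ⟨h1, h2⟩
    exact Finset.mem_map.mpr ⟨⟨x, y⟩, Finset.mem_sigma.mpr ⟨h1, h2⟩, rfl⟩

lemma eval_injective {X : Type u} [Nontrivial R] :
    Function.Injective (fun x : X => fun P : X → R => P x) := by
  classical
  intro a b h
  by_contra hab
  obtain ⟨r, s, hrs⟩ := exists_pair_ne R
  have h2 : (if a = a then r else s) = (if b = a then r else s) :=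
    congrFun h (fun z => if z = a then r else s)
  rw [if_pos rfl, if_neg (fun hh : b = a => hab hh.symm)] at h2
  exact hrs h2

open Classical in
/-- The auxiliary selection function on `X → R` used in the reverse direction. -/
noncomputable def auxDelta {X : Type u} [Nontrivial R] (I : X → Finset (X → R))
    (hI : ∀ x, (I x).Nonempty) : Sel R (X → R) where
  fn k := if h : ∃ x', k = (fun P => P x') then I h.choose
    else {fun _ => Classical.arbitrary R}
  ne k := by
    split
    · exact hI _
    · exact ⟨_, Finset.mem_singleton_self _⟩

lemma auxDelta_eval {X : Type u} [Nontrivial R] (I : X → Finset (X → R))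
    (hI : ∀ x, (I x).Nonempty) (x : X) :
    (auxDelta I hI).fn (fun P => P x) = I x := by
  have h : ∃ x', (fun P : X → R => P x) = (fun P => P x') := ⟨x, rfl⟩
  have hc : h.choose = x := (eval_injective h.choose_spec.symm)
  simp only [auxDelta, dif_pos h, hc]

end Aux

/-- `ε` is witnessing iff for every `Y`, `δ`, `q`, `(ε ⊗ δ)(q) ⊆ Rat(q, ε, δ)`. -/
theorem witnessing_iff_prod_subset_rat {R X : Type u} [SemilatticeSup R] [Nontrivial R]
    (ε : Sel R X) :
    Witnessing ε ↔
      ∀ (Y : Type u) (δ : Sel R Y) (q : X × Y → R),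
        ∀ p : X × Y, p ∈ (ε.prod δ).fn q → p ∈ RatPlays ε δ q := by
  classical
  constructor
  · -- witnessing implies product ⊆ rational plays
    intro hW Y δ q p hp
    obtain ⟨x, y⟩ := p
    rw [mem_prod_iff] at hp
    obtain ⟨hx, hy⟩ := hp
    set I : X → Finset (X → R) :=
      fun x' => (δ.fn (fun y'' => q (x', y''))).image (fun y' => fun x'' => q (x'', y'))
        with hIdef
    have hI : ∀ x', (I x').Nonempty := fun x' => (δ.ne _).image _
    have hx' : x ∈ ε.fn (fun x' => (I x').sup' (hI x') (fun P => P x')) := by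
      have : (fun x' => (I x').sup' (hI x') (fun P => P x')) =
          (fun x' => (δ.fn (fun y'' => q (x', y''))).sup' (δ.ne _) (fun y' => q (x', y'))) := by
        funext x'
        exact Finset.sup'_image _ _
      rw [this]
      exact hx
    obtain ⟨pf, hpf, hxp⟩ := hW I hI x hx'
    have hchoice : ∀ x', ∃ y', y' ∈ δ.fn (fun y'' => q (x', y'')) ∧
        (fun x'' => q (x'', y')) = pf x' := by
      intro x'
      have := hpf x'
      rw [hIdef] at this
      simpa using Finset.mem_image.mp this
    choose yf hyf1 hyf2 using hchoice
    have hctx : x ∈ ε.fn (fun x' => q (x', yf x')) := by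
      have : (fun x' => q (x', yf x')) = (fun x' => pf x' x') := by
        funext x'
        exact congrFun (hyf2 x') x'
      rw [this]; exact hxp
    refine ⟨x, Function.update yf x y, ⟨⟨yf, hyf1, hctx⟩, ?_⟩, ?_⟩
    · intro x'
      by_cases h : x' = x
      · subst h; rw [Function.update_self]; exact hy
      · rw [Function.update_of_ne h]; exact hyf1 x'
    · rw [Function.update_self]
  · -- converse
    intro hsub I hI x hx
    set δ := auxDelta I hI with hδ
    set q : X × (X → R) → R := fun p => p.2 p.1 with hq
    have hctx : x ∈ ε.fn (fun x' =>
        (δ.fn (fun P => q (x', P))).sup' (δ.ne _) (fun P => q (x', P))) := by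
      have : (fun x' => (δ.fn (fun P => q (x', P))).sup' (δ.ne _) (fun P => q (x', P))) =
          (fun x' => (I x').sup' (hI x') (fun P => P x')) := by
        funext x'
        exact sup'_eq_of_seteq (auxDelta_eval I hI x') _ _ _
      rw [this]; exact hx
    obtain ⟨y, hy⟩ : ((δ.fn (fun P => q (x, P)))).Nonempty := δ.ne _
    have hmem : (x, y) ∈ (ε.prod δ).fn q := (mem_prod_iff ε δ q x y).mpr ⟨hctx, hy⟩
    obtain ⟨σ₁, σ₂, ⟨⟨yf, hyf, hσ₁⟩, _⟩, heq⟩ := hsub (X → R) δ q (x, y) hmem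
    have hx1 : x = σ₁ := congrArg Prod.fst heq
    subst hx1
    refine ⟨fun x' => yf x', fun x' => ?_, hσ₁⟩
    have := hyf x'
    rwa [show (fun y' => q (x', y')) = (fun P : X → R => P x') from rfl,
      auxDelta_eval I hI x'] at this
end

section
/- Let R be a join-semilattice with at least two elements, X a type, and ε a multi-valued selection function on X. Then ε is upwards closed if and only if for every type Y, every multi-valued selection function δ on Y, and every q : X × Y → R, one has Rat(q, ε, δ) ⊆ (ε ⊗ δ)(q). -/
universe u

variable {R : Type u} [SemilatticeSup R]

/-! If ε is upwards closed, take as indexing function at `x` the constant contexts `q (x, y)`,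
`y` ranging over the δ-selected replies: a rational play picks one of them at every `x`, and
upwards closure lifts the selection of `σ₁` to the context of joins used by `ε ⊗ δ`.

Conversely, given `I` and a choice function `p`, let the second player choose a context
`P : X → R`, with outcome `P x` after the first move `x`, and let δ select `I x` at the
evaluation functional at `x`. Then `(x, p x)` is a subgame perfect, hence rational, play, and its
membership in `ε ⊗ δ` is exactly the conclusion of upwards closure. -/

theorem Sel.mk_mem_prod_fn {X Y : Type u} {ε : Sel R X} {δ : Sel R Y} {q : X × Y → R}
    {x : X} {y : Y} :
    (x, y) ∈ (ε.prod δ).fn q ↔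
      x ∈ ε.fn (fun x => (δ.fn (fun y => q (x, y))).sup' (δ.ne _) (fun y => q (x, y))) ∧
        y ∈ δ.fn (fun y => q (x, y)) := by
  constructor
  · intro h
    obtain ⟨⟨a, b⟩, hab, he⟩ := Finset.mem_map.1 h
    obtain ⟨rfl, rfl⟩ := Prod.mk.inj he
    exact Finset.mem_sigma.1 hab
  · rintro ⟨hx, hy⟩
    exact Finset.mem_map.2 ⟨⟨x, y⟩, Finset.mem_sigma.2 ⟨hx, hy⟩, rfl⟩

theorem UpwardsClosed.mem_fn_sup' {X Y : Type u} {ε : Sel R X} (hε : UpwardsClosed ε)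
    {S : X → Finset Y} (hS : ∀ x, (S x).Nonempty) (f : X → Y → R) {g : X → Y}
    (hg : ∀ x, g x ∈ S x) {x : X} (hx : x ∈ ε.fn (fun x => f x (g x))) :
    x ∈ ε.fn (fun x => (S x).sup' (hS x) (f x)) := by
  classical
  have h := hε (fun x => (S x).image fun y _ => f x y) (fun x => (hS x).image _)
    (fun x _ => f x (g x)) (fun x => Finset.mem_image_of_mem _ (hg x)) x hx
  simp only [Finset.sup'_image] at h
  exact h

theorem UpwardsClosed.ratPlays_subset_prod {X Y : Type u} {ε : Sel R X} (hε : UpwardsClosed ε)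
    (δ : Sel R Y) (q : X × Y → R) : RatPlays ε δ q ⊆ ((ε.prod δ).fn q : Set (X × Y)) := by
  rintro _ ⟨σ₁, σ₂, ⟨⟨yf, hyf, hσ₁⟩, hσ₂⟩, rfl⟩
  exact Sel.mk_mem_prod_fn.2
    ⟨hε.mem_fn_sup' (fun x => δ.ne _) (fun x y => q (x, y)) hyf hσ₁, hσ₂ σ₁⟩

theorem spPlays_subset_ratPlays {X Y : Type u} (ε : Sel R X) (δ : Sel R Y) (q : X × Y → R) :
    SPPlays ε δ q ⊆ RatPlays ε δ q := by
  rintro _ ⟨σ₁, σ₂, ⟨hσ₁, hσ₂⟩, rfl⟩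
  exact ⟨σ₁, σ₂, ⟨⟨σ₂, hσ₂, hσ₁⟩, hσ₂⟩, rfl⟩

theorem injective_eval {X S : Type*} [Nontrivial S] :
    Function.Injective (fun (a : X) (P : X → S) => P a) := by
  classical
  intro a b hab
  obtain ⟨r, s, hrs⟩ := exists_pair_ne S
  by_contra hne
  have h := congrFun hab (fun z => if z = a then r else s)
  simp only [if_pos, if_neg (Ne.symm hne)] at h
  exact hrs h

noncomputable def Sel.ofIndexing [Nonempty R] {X : Type u} (I : X → Finset (X → R))
    (hI : ∀ x, (I x).Nonempty) : Sel R (X → R) where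
  fn := Function.extend (fun a P => P a) I (fun _ => {Classical.arbitrary _})
  ne k := by
    unfold Function.extend
    split
    exacts [hI _, Finset.singleton_nonempty _]

theorem Sel.ofIndexing_fn_eval [Nontrivial R] {X : Type u} (I : X → Finset (X → R))
    (hI : ∀ x, (I x).Nonempty) (a : X) : (Sel.ofIndexing I hI).fn (fun P => P a) = I a :=
  injective_eval.extend_apply I (fun _ => {Classical.arbitrary _}) a

/-- `ε` is upwards closed iff for every `Y`, `δ`, `q`, `Rat(q, ε, δ) ⊆ (ε ⊗ δ)(q)`. -/
theorem upwardsClosed_iff_rat_subset_prod {R X : Type u} [SemilatticeSup R] [Nontrivial R]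
    (ε : Sel R X) :
    UpwardsClosed ε ↔
      ∀ (Y : Type u) (δ : Sel R Y) (q : X × Y → R),
        ∀ p : X × Y, p ∈ RatPlays ε δ q → p ∈ (ε.prod δ).fn q := by
  refine ⟨fun hε Y δ q => hε.ratPlays_subset_prod δ q, fun h I hI p hp x hx => ?_⟩
  let δ := Sel.ofIndexing I hI
  have hδ : ∀ a, δ.fn (fun P => P a) = I a := Sel.ofIndexing_fn_eval I hI
  have hsp : (x, p x) ∈ SPPlays ε δ (fun z => z.2 z.1) :=
    ⟨x, p, ⟨hx, fun a => (hδ a).symm ▸ hp a⟩, rfl⟩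
  have hprod := h _ δ _ _ (spPlays_subset_ratPlays _ _ _ hsp)
  simpa only [hδ] using (Sel.mk_mem_prod_fn.1 hprod).1
end

section
/- Let R be a join-semilattice, X a type, and ε a multi-valued selection function on X that is both witnessing and upwards closed. Then for every type Y, every multi-valued selection function δ on Y, and every q : X × Y → R, one has (ε ⊗ δ)(q) = Rat(q, ε, δ). -/
universe u

variable {R : Type u} [SemilatticeSup R]

/-!
A selection `x ∈ ε (fun x' => ⋁ {q (x', y') | y' ∈ δ (q (x', ·))})` is a selection in the context
of the indexing function `x' ↦ {const (q (x', y')) | y' ∈ δ (q (x', ·))}`, whose choice functions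
are exactly the strategies `g` of the second player that stay inside `δ`. Being witnessing and
upwards closed says that `ε` selects `x` in the joined context iff it does so in the context
`q (·, g ·)` of some such `g`, which is the first condition of rationality; the second player's
move at `x` is unconstrained by that condition.
-/

namespace Sel

variable {X ι α : Type*}

open Classical in
noncomputable def constIndexing (S : X → Finset ι) (f : X → ι → α) : X → Finset (X → α) :=
  fun x => (S x).image fun i _ => f x i

variable {S : X → Finset ι} {f : X → ι → α}

theorem mem_constIndexing {x : X} {P : X → α} :
    P ∈ constIndexing S f x ↔ ∃ i ∈ S x, (fun _ => f x i) = P := by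
  classical
  simp only [constIndexing, Finset.mem_image]

theorem constIndexing_nonempty (hS : ∀ x, (S x).Nonempty) (x : X) :
    (constIndexing S f x).Nonempty := by
  classical
  exact (hS x).image _

theorem sup'_constIndexing [SemilatticeSup α] (hS : ∀ x, (S x).Nonempty) :
    (fun x => (constIndexing S f x).sup' (constIndexing_nonempty hS x) fun P => P x) =
      fun x => (S x).sup' (hS x) (f x) := by
  classical
  exact funext fun x => Finset.sup'_image _ _

end Sel

open Sel

theorem Witnessing.exists_choice_of_mem_sup' {X : Type u} {ι : Type*} {ε : Sel R X}
    (hw : Witnessing ε) {S : X → Finset ι} (hS : ∀ x, (S x).Nonempty) {f : X → ι → R} {x : X}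
    (hx : x ∈ ε.fn fun x' => (S x').sup' (hS x') (f x')) :
    ∃ g : X → ι, (∀ x', g x' ∈ S x') ∧ x ∈ ε.fn fun x' => f x' (g x') := by
  rw [← sup'_constIndexing hS] at hx
  obtain ⟨p, hp, hxp⟩ := hw _ (constIndexing_nonempty hS) x hx
  choose g hgS hg using fun x' => mem_constIndexing.1 (hp x')
  refine ⟨g, hgS, ?_⟩
  simpa only [← hg] using hxp

theorem UpwardsClosed.mem_sup'_of_choice {X : Type u} {ι : Type*} {ε : Sel R X}
    (hu : UpwardsClosed ε) {S : X → Finset ι} (hS : ∀ x, (S x).Nonempty) {f : X → ι → R}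
    {g : X → ι} (hg : ∀ x, g x ∈ S x) {x : X} (hx : x ∈ ε.fn fun x' => f x' (g x')) :
    x ∈ ε.fn fun x' => (S x').sup' (hS x') (f x') := by
  rw [← sup'_constIndexing hS]
  exact hu _ (constIndexing_nonempty hS) (fun x' _ => f x' (g x'))
    (fun x' => mem_constIndexing.2 ⟨g x', hg x', rfl⟩) x hx

section Plays

variable {X Y : Type u} {ε : Sel R X} {δ : Sel R Y} {q : X × Y → R} {x : X} {y : Y}

theorem Sel.mem_prod_fn :
    (x, y) ∈ (ε.prod δ).fn q ↔
      (x ∈ ε.fn fun x' => (δ.fn fun y' => q (x', y')).sup' (δ.ne _) fun y' => q (x', y')) ∧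
        y ∈ δ.fn fun y' => q (x, y') := by
  simp only [Sel.prod, Finset.mem_map, Finset.mem_sigma]
  constructor
  · rintro ⟨⟨x', y'⟩, h, he⟩
    cases he
    exact h
  · exact fun h => ⟨⟨x, y⟩, h, rfl⟩

theorem mem_ratPlays_iff :
    (x, y) ∈ RatPlays ε δ q ↔
      (∃ g : X → Y, (∀ x', g x' ∈ δ.fn fun y' => q (x', y')) ∧ x ∈ ε.fn fun x' => q (x', g x')) ∧
        y ∈ δ.fn fun y' => q (x, y') := by
  classical
  constructor
  · rintro ⟨σ₁, σ₂, ⟨hσ₁, hσ₂⟩, h⟩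
    obtain ⟨rfl, rfl⟩ := Prod.mk.inj h
    exact ⟨hσ₁, hσ₂ _⟩
  · rintro ⟨⟨g, hg, hx⟩, hy⟩
    refine ⟨x, Function.update g x y, ⟨⟨g, hg, hx⟩, fun x' => ?_⟩, by rw [Function.update_self]⟩
    rcases eq_or_ne x' x with rfl | hne
    · rwa [Function.update_self]
    · rw [Function.update_of_ne hne]
      exact hg x'

end Plays

/-- If `ε` is both witnessing and upwards closed then for every `Y`, `δ` and `q`,
`(ε ⊗ δ)(q) = Rat(q, ε, δ)`. -/
theorem prod_eq_rat_of_witnessing_upwardsClosed {R X : Type u} [SemilatticeSup R]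
    (ε : Sel R X) (hw : Witnessing ε) (hu : UpwardsClosed ε) :
    ∀ (Y : Type u) (δ : Sel R Y) (q : X × Y → R),
      ((ε.prod δ).fn q : Set (X × Y)) = RatPlays ε δ q := by
  intro Y δ q
  ext ⟨x, y⟩
  rw [Finset.mem_coe, Sel.mem_prod_fn, mem_ratPlays_iff]
  refine and_congr_left' ⟨hw.exists_choice_of_mem_sup' (fun x' => δ.ne _), ?_⟩
  rintro ⟨g, hg, hx⟩
  exact hu.mem_sup'_of_choice (fun x' => δ.ne _) hg hx
end

section
/- Let R be a join-semilattice with at least two elements, let n ≥ 1, let X₁, …, X_{n-1} be nonempty finite types and ε_i a multi-valued selection function on X_i for each i < n. Then ε_i is witnessing for every i < n if and only if for every nonempty finite type Xₙ, every multi-valued selection function εₙ on Xₙ, and every outcome function q : X₁ × ⋯ × Xₙ → R, the set (⨂_{i=1}^n ε_i)(q) is a subset of the set of Σ(G) plays of the game G = (q, (ε₁, …, εₙ)). -/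
universe u

variable {R : Type u} [SemilatticeSup R]

/-- Transport a selection function along an equivalence of move types. -/
def Sel.comap {X Y : Type u} (ε : Sel R X) (e : X ≃ Y) : Sel R Y where
  fn k := (ε.fn (fun x => k (e x))).map e.toEmbedding
  ne k := (ε.ne _).map

/-- The identification of `X 0` with plays of a one-round game. -/
def oneEquiv (X : Fin 1 → Type u) : X 0 ≃ ∀ i, X i where
  toFun x i := Fin.cases x (fun j => j.elim0) i
  invFun f := f 0
  left_inv x := by simp
  right_inv f := funext fun i => Fin.cases rfl (fun j => j.elim0) i

/-- The `n`-fold product of selection functions, iterating the binary product to the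
left: `⨂_{i} ε_i = ε 0 ⊗ (⨂_{i>0} ε_i)`, identifying plays `∀ i, X i` with
`X 0 × (∀ i, X i.succ)`; the product of a single selection function is itself. -/
def bigProd : {n : ℕ} → {X : Fin (n + 1) → Type u} → (∀ i, Sel R (X i)) →
    Sel R (∀ i, X i)
  | 0, X, ε => (ε 0).comap (oneEquiv X)
  | _ + 1, X, ε => ((ε 0).prod (bigProd (fun i => ε i.succ))).comap (Fin.consEquiv X)

/-- A partial play of length `k` in a game with move types `X`: the moves of all
rounds `j` with `j < k`. -/
def PartialPlay {n : ℕ} (X : Fin n → Type u) (k : ℕ) : Type u :=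
  ∀ j : Fin n, (j : ℕ) < k → X j

/-- A strategy for round `i`: a choice of move in `X i` contingent on the moves of
all previous rounds. -/
def Strat {n : ℕ} (X : Fin n → Type u) (i : Fin n) : Type u :=
  PartialPlay X i → X i

/-- Extending a partial play by one further move. -/
def PartialPlay.snoc {n : ℕ} {X : Fin n → Type u} {i : Fin n}
    (x : PartialPlay X i) (y : X i) : PartialPlay X (i + 1) :=
  fun j hj =>
    if h : (j : ℕ) < i then x j h
    else (Fin.ext (by omega) : i = j) ▸ y

/-- The moves of the first `m` rounds obtained by playing out the strategies `σ`
from the partial play `x` of length `k` onwards. -/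
def extPlay {n : ℕ} {X : Fin n → Type u} (σ : ∀ i, Strat X i) (k : ℕ)
    (x : PartialPlay X k) : (m : ℕ) → PartialPlay X m
  | 0 => fun _ hj => absurd hj (Nat.not_lt_zero _)
  | m + 1 => fun j hj =>
      if hk : (j : ℕ) < k then x j hk
      else if hm : (j : ℕ) < m then extPlay σ k x m j hm
      else σ j (fun j' hj' => extPlay σ k x m j' (by omega))

/-- The strategic extension of a partial play `x` by the strategies `σ` (only the
strategies of rounds `≥ k` are used). -/
def stratExt {n : ℕ} {X : Fin n → Type u} (σ : ∀ i, Strat X i) (k : ℕ)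
    (x : PartialPlay X k) : ∀ j, X j :=
  fun j => extPlay σ k x n j j.isLt

/-- The strategic play of a strategy profile `σ`. -/
def stratPlay {n : ℕ} {X : Fin n → Type u} (σ : ∀ i, Strat X i) : ∀ j, X j :=
  stratExt σ 0 (fun _ hj => absurd hj (Nat.not_lt_zero _))

/-- A (round-indexed) set `Γ` of strategies is consistent for the game with outcome
function `q` and selection functions `ε`: for every round `i`, every `σi ∈ Γ i` and
every partial play `x` of length `i`, there are strategies in `Γ` for the rounds
after `i` such that `σi x` is selected by `ε i` in the context where each possible
next move `y` leads to the outcome of the strategic extension of `(x, y)`. -/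
def Consistent {n : ℕ} {X : Fin n → Type u} {R : Type u} [SemilatticeSup R]
    (q : (∀ i, X i) → R) (ε : ∀ i, Sel R (X i)) (Γ : ∀ i, Set (Strat X i)) : Prop :=
  ∀ (i : Fin n), ∀ σi ∈ Γ i, ∀ x : PartialPlay X i,
    ∃ σ : ∀ j, Strat X j, (∀ j, i < j → σ j ∈ Γ j) ∧
      σi x ∈ (ε i).fn (fun y => q (stratExt σ (i + 1) (x.snoc y)))

/-- The maximal consistent set `Σ(G)` of strategies, defined by downwards recursion
on the round: a round-`i` strategy belongs to `Σ(G)` iff it, together with all the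
strategies of `Σ(G)` at later rounds, forms a consistent set. -/
def SigmaG {n : ℕ} {X : Fin n → Type u} {R : Type u} [SemilatticeSup R]
    (q : (∀ i, X i) → R) (ε : ∀ i, Sel R (X i)) : (i : Fin n) → Set (Strat X i) :=
  fun i =>
    {σi | Consistent q ε (fun j =>
      if h : i = j then {h ▸ σi}
      else if hij : i < j then SigmaG q ε j
      else ∅)}
termination_by i => n - (i : ℕ)
decreasing_by
  have h1 : (i : ℕ) < (j : ℕ) := hij
  have h2 : (j : ℕ) < n := j.isLt
  omega

/-- `x` is a `Σ(G)` play if it is the strategic play of a strategy profile all of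
whose strategies lie in `Σ(G)`. -/
def IsSigmaPlay {n : ℕ} {X : Fin n → Type u} {R : Type u} [SemilatticeSup R]
    (q : (∀ i, X i) → R) (ε : ∀ i, Sel R (X i)) (x : ∀ i, X i) : Prop :=
  ∃ σ : ∀ i, Strat X i, (∀ i, σ i ∈ SigmaG q ε i) ∧ x = stratPlay σ

/-- The family of move types of an `(m+1)`-round game whose first `m` move types are
given by `X` and whose last move type is `Y`. -/
def snocTypes {m : ℕ} (X : Fin m → Type u) (Y : Type u) : Fin (m + 1) → Type u :=
  Fin.snoc (α := fun _ => Type u) X Y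

/-- Appending a final-round selection function to a family. -/
def snocSel {R : Type u} [SemilatticeSup R] {m : ℕ} {X : Fin m → Type u} {Y : Type u}
    (ε : ∀ i, Sel R (X i)) (δ : Sel R Y) :
    ∀ i : Fin (m + 1), Sel R (snocTypes X Y i) :=
  Fin.lastCases
    (cast (by simp [snocTypes]) δ)
    (fun i => cast (by simp [snocTypes]) (ε i))

/-!
Forward direction, by induction on the number of rounds. A play `(a, b)` of
`ε₀ ⊗ (⨂ εᵢ₊₁)` has `a` selected against, for each first move `a'`, the supremum of the outcomes
of the product plays of the subgame after `a'`. Because `ε₀` is witnessing, these suprema can be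
replaced by the outcome of a single product play `T a'` of each subgame, which by induction is a
`Σ`-play of that subgame. Playing `a` first and then, in the subgame after `a'`, a `Σ`-profile
for `T a'` (for `b` when `a' = a`) gives a `Σ`-profile whose play is `(a, b)`; whether a strategy
of a later round lies in `Σ(G)` can be checked subgame by subgame.

Converse. Given a round `i` and an indexing function `I`, let the last player choose any choice
function for `I`, and let the outcome be the value of the chosen function at the round-`i` move.
The supremum that the product takes at round `i` is then the pointwise join over `I`, so every `x`
selected against that join is the round-`i` move of some product play. This play is a `Σ`-play,
so `x` is selected against the outcomes of some later `Σ`-strategies. Those outcomes are the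
values of the choice functions the last player picks after each move `x'`, and these give the
required choice function.
-/

namespace Sel

variable {A B : Type u}

theorem mem_comap {ε : Sel R A} {e : A ≃ B} {k : B → R} {b : B} :
    b ∈ (ε.comap e).fn k ↔ e.symm b ∈ ε.fn (fun a => k (e a)) := by
  simp [comap, Finset.mem_map_equiv]

theorem cast_eq_comap (h : A = B) (p : Sel R A = Sel R B) (ε : Sel R A) :
    cast p ε = ε.comap (Equiv.cast h) := by
  subst h
  cases ε
  simp [comap]

theorem mem_prod {δ : Sel R B} {ε : Sel R A} {q : A × B → R} {a : A} {b : B} :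
    (a, b) ∈ (ε.prod δ).fn q ↔
      a ∈ ε.fn (fun a' => (δ.fn fun b' => q (a', b')).sup' (δ.ne _) fun b' => q (a', b')) ∧
        b ∈ δ.fn fun b' => q (a, b') := by
  simp only [Sel.prod, Finset.mem_map, Finset.mem_sigma]
  constructor
  · rintro ⟨⟨a', b'⟩, h, he⟩
    cases he
    exact h
  · exact fun h => ⟨⟨a, b⟩, h, rfl⟩

def univ (A : Type u) [Fintype A] [Nonempty A] : Sel R A :=
  ⟨fun _ => Finset.univ, fun _ => Finset.univ_nonempty⟩

end Sel

theorem Witnessing.exists_mem_of_mem_sup' {A B : Type u} {ε : Sel R A} (hε : Witnessing ε)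
    (S : A → Finset B) (hS : ∀ a, (S a).Nonempty) (g : A → B → R) {a : A}
    (ha : a ∈ ε.fn fun a' => (S a').sup' (hS a') (g a')) :
    ∃ T : A → B, (∀ a', T a' ∈ S a') ∧ a ∈ ε.fn fun a' => g a' (T a') := by
  classical
  let I : A → Finset (A → R) := fun a' => (S a').image fun b a'' => g a'' b
  have hsup : (fun a' => (I a').sup' ((hS a').image _) fun P => P a') =
      fun a' => (S a').sup' (hS a') (g a') :=
    funext fun a' => Finset.sup'_image _ _
  obtain ⟨p, hp, hap⟩ := hε I (fun a' => (hS a').image _) a (hsup ▸ ha)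
  choose T hT hTp using fun a' => Finset.mem_image.1 (hp a')
  refine ⟨T, hT, ?_⟩
  simpa only [← hTp] using hap

theorem Witnessing.comap {A B : Type u} {ε : Sel R A} (hε : Witnessing ε) (e : A ≃ B) :
    Witnessing (ε.comap e) := by
  intro I hI b hb
  rw [Sel.mem_comap] at hb
  obtain ⟨T, hT, hbT⟩ := hε.exists_mem_of_mem_sup' (fun a => I (e a)) (fun a => hI (e a))
    (fun a P => P (e a)) hb
  refine ⟨fun b' => T (e.symm b'), fun b' => by simpa using hT (e.symm b'), ?_⟩
  rw [Sel.mem_comap]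
  simpa using hbT

namespace PartialPlay

variable {n : ℕ} {X : Fin n → Type u}

theorem snoc_of_lt {i : Fin n} (x : PartialPlay X i) (y : X i) {j : Fin n}
    (hj : (j : ℕ) < i + 1) (h : (j : ℕ) < i) : x.snoc y j hj = x j h :=
  dif_pos h

theorem snoc_self {i : Fin n} (x : PartialPlay X i) (y : X i) (h : (i : ℕ) < i + 1) :
    x.snoc y i h = y :=
  dif_neg (lt_irrefl _)

end PartialPlay

section StrategicExtension

variable {n : ℕ} {X : Fin n → Type u} (σ : ∀ i, Strat X i) {k : ℕ} (x : PartialPlay X k)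

theorem extPlay_of_lt {j : Fin n} (hk : (j : ℕ) < k) :
    ∀ m (hj : (j : ℕ) < m), extPlay σ k x m j hj = x j hk
  | 0, hj => absurd hj (Nat.not_lt_zero _)
  | _ + 1, _ => dif_pos hk

theorem extPlay_succ {m : ℕ} {j : Fin n} (hj : (j : ℕ) < m + 1) (hjm : (j : ℕ) < m) :
    extPlay σ k x (m + 1) j hj = extPlay σ k x m j hjm := by
  by_cases hk : (j : ℕ) < k
  · rw [extPlay_of_lt σ x hk, extPlay_of_lt σ x hk]
  · exact (dif_neg hk).trans (dif_pos hjm)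

theorem extPlay_eq_of_le {m m' : ℕ} (hm : m ≤ m') {j : Fin n} (hj : (j : ℕ) < m)
    (hj' : (j : ℕ) < m') : extPlay σ k x m' j hj' = extPlay σ k x m j hj := by
  induction m', hm using Nat.le_induction with
  | base => rfl
  | succ m' hm ih => rw [extPlay_succ σ x hj' (by omega), ih]

theorem extPlay_of_le {j : Fin n} (hk : k ≤ (j : ℕ)) :
    ∀ m (hj : (j : ℕ) < m), extPlay σ k x m j hj = σ j (fun j' hj' => extPlay σ k x j j' hj')
  | 0, hj => absurd hj (Nat.not_lt_zero _)
  | m + 1, hj => by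
    by_cases hjm : (j : ℕ) < m
    · rw [extPlay_succ σ x hj hjm, extPlay_of_le hk m hjm]
    · obtain rfl : (j : ℕ) = m := by omega
      exact (dif_neg (by omega)).trans (dif_neg hjm)

theorem stratExt_of_lt {j : Fin n} (hk : (j : ℕ) < k) : stratExt σ k x j = x j hk :=
  extPlay_of_lt σ x hk n j.isLt

theorem stratExt_of_le {j : Fin n} (hk : k ≤ (j : ℕ)) :
    stratExt σ k x j = σ j (fun j' _ => stratExt σ k x j') := by
  rw [stratExt, extPlay_of_le σ x hk]
  congr 1
  funext j' hj'
  exact (extPlay_eq_of_le σ x j.isLt.le hj' j'.isLt).symm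

theorem eq_stratExt {z : ∀ j, X j} (hlt : ∀ (j : Fin n) (hj : (j : ℕ) < k), z j = x j hj)
    (hle : ∀ j : Fin n, k ≤ (j : ℕ) → z j = σ j (fun j' _ => z j')) : z = stratExt σ k x := by
  funext j
  induction j using WellFoundedLT.induction with
  | ind j ih =>
    by_cases hk : (j : ℕ) < k
    · rw [hlt j hk, stratExt_of_lt σ x hk]
    · rw [hle j (not_lt.1 hk), stratExt_of_le σ x (not_lt.1 hk)]
      congr 1
      funext j' hj'
      exact ih j' hj'

theorem stratPlay_apply (j : Fin n) : stratPlay σ j = σ j (fun j' _ => stratPlay σ j') :=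
  stratExt_of_le σ _ (Nat.zero_le _)

end StrategicExtension

section Subgames

variable {n : ℕ} {X : Fin (n + 1) → Type u}

namespace PartialPlay

def cons {k : ℕ} (a : X 0) (w : PartialPlay (fun j : Fin n => X j.succ) k) :
    PartialPlay X (k + 1) :=
  fun j => Fin.cases (motive := fun j => (j : ℕ) < k + 1 → X j) (fun _ => a)
    (fun j hj => w j (Nat.lt_of_succ_lt_succ hj)) j

def tail {k : ℕ} (z : PartialPlay X (k + 1)) : PartialPlay (fun j : Fin n => X j.succ) k :=
  fun j hj => z j.succ (Nat.succ_lt_succ hj)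

variable {k : ℕ}

theorem cons_tail (z : PartialPlay X (k + 1)) : cons (z 0 (Nat.succ_pos k)) z.tail = z := by
  funext j hj
  cases j using Fin.cases <;> rfl

theorem tail_snoc {i : Fin n} (z : PartialPlay X (i + 1)) (y : X i.succ) :
    (z.snoc y).tail = z.tail.snoc (i := i) y := by
  funext j hj
  by_cases h : (j : ℕ) < i
  · exact (snoc_of_lt z y _ (Nat.succ_lt_succ h)).trans (snoc_of_lt z.tail y hj h).symm
  · obtain rfl : j = i := Fin.ext (by simp only [Fin.val_succ] at hj; omega)
    exact (snoc_self z y _).trans (snoc_self z.tail y hj).symm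

end PartialPlay

def consProfile (a : X 0) (τ : X 0 → ∀ j, Strat (fun j : Fin n => X j.succ) j) :
    ∀ j, Strat X j :=
  Fin.cases (fun _ => a) (fun j w => τ (w 0 (Nat.succ_pos _)) j w.tail)

variable (a : X 0) (τ : X 0 → ∀ j, Strat (fun j : Fin n => X j.succ) j)

theorem consProfile_succ_cons (j : Fin n) (a' : X 0) (w : PartialPlay _ j) :
    consProfile a τ j.succ (PartialPlay.cons a' w) = τ a' j w :=
  rfl

theorem consProfile_succ_apply (j : Fin n) (a' : X 0) (e : ∀ j : Fin n, X j.succ) :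
    consProfile a τ j.succ (fun j' _ => Fin.cons a' e j') = τ a' j (fun j' _ => e j') :=
  rfl

theorem stratExt_consProfile {k : ℕ} (z : PartialPlay X (k + 1)) {a' : X 0}
    (hz : ∀ h, z 0 h = a') :
    stratExt (consProfile a τ) (k + 1) z = Fin.cons a' (stratExt (τ a') k z.tail) := by
  obtain rfl := hz (Nat.succ_pos k)
  refine (eq_stratExt _ _ (fun j hj => ?_) (fun j hj => ?_)).symm
  · cases j using Fin.cases with
    | zero => rfl
    | succ j => exact (Fin.cons_succ _ _ _).trans (stratExt_of_lt _ _ (Nat.lt_of_succ_lt_succ hj))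
  · cases j using Fin.cases with
    | zero => exact absurd hj (by simp)
    | succ j =>
      rw [consProfile_succ_apply, Fin.cons_succ]
      exact stratExt_of_le _ _ (by simpa using hj)

theorem stratPlay_consProfile :
    stratPlay (consProfile a τ) = Fin.cons a (stratPlay (τ a)) := by
  refine (eq_stratExt _ _ (fun j hj => absurd hj (Nat.not_lt_zero _)) (fun j _ => ?_)).symm
  cases j using Fin.cases with
  | zero => rfl
  | succ j =>
    rw [consProfile_succ_apply, Fin.cons_succ]
    exact stratPlay_apply _ _

end Subgames

theorem stratExt_zero {n : ℕ} {X : Fin n → Type u} (σ : ∀ i, Strat X i) (x : PartialPlay X 0) :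
    stratExt σ 0 x = stratPlay σ := by
  congr
  funext j hj
  exact absurd hj (Nat.not_lt_zero _)

section SigmaG

variable {n : ℕ} {X : Fin n → Type u} (q : (∀ i, X i) → R) (ε : ∀ i, Sel R (X i))

theorem mem_sigmaG_iff {i : Fin n} {σi : Strat X i} :
    σi ∈ SigmaG q ε i ↔ ∀ x : PartialPlay X i, ∃ σ : ∀ j, Strat X j,
      (∀ j, i < j → σ j ∈ SigmaG q ε j) ∧
        σi x ∈ (ε i).fn (fun y => q (stratExt σ (i + 1) (x.snoc y))) := by
  have forward : ∀ {i : Fin n} {σi : Strat X i}, σi ∈ SigmaG q ε i → ∀ x : PartialPlay X i,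
      ∃ σ : ∀ j, Strat X j, (∀ j, i < j → σ j ∈ SigmaG q ε j) ∧
        σi x ∈ (ε i).fn (fun y => q (stratExt σ (i + 1) (x.snoc y))) := by
    intro i σi h x
    rw [SigmaG] at h
    obtain ⟨σ, hσ, hx⟩ := h i σi (by simp) x
    refine ⟨σ, fun j hj => ?_, hx⟩
    simpa [hj.ne, hj] using hσ j hj
  refine ⟨forward, fun h => ?_⟩
  rw [SigmaG]
  intro i' σ' hσ' x
  by_cases hii' : i = i'
  · subst hii'
    obtain rfl : σ' = σi := by simpa using hσ'
    obtain ⟨σ, hσ, hx⟩ := h x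
    exact ⟨σ, fun j hj => by simpa [hj.ne, hj] using hσ j hj, hx⟩
  · by_cases hlt : i < i'
    · obtain ⟨σ, hσ, hx⟩ := forward (by simpa [hii', hlt] using hσ') x
      refine ⟨σ, fun j hj => ?_, hx⟩
      simpa [(hlt.trans hj).ne, hlt.trans hj] using hσ j hj
    · simp [hii', hlt] at hσ'

theorem exists_sigmaG_profile [∀ j, Nonempty (X j)] :
    ∃ σ : ∀ i, Strat X i, ∀ i, σ i ∈ SigmaG q ε i := by
  suffices h : ∀ i, (SigmaG q ε i).Nonempty from ⟨fun i => (h i).some, fun i => (h i).some_mem⟩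
  intro i
  induction i using WellFoundedGT.induction with
  | ind i ih =>
    classical
    let ρ : ∀ j, Strat X j := fun j =>
      if h : i < j then (ih j h).some else fun _ => Classical.arbitrary _
    refine ⟨fun x => ((ε i).ne fun y => q (stratExt ρ (i + 1) (x.snoc y))).choose,
      (mem_sigmaG_iff q ε).2 fun x => ⟨ρ, fun j hj => ?_, Exists.choose_spec _⟩⟩
    simpa [ρ, hj] using (ih j hj).some_mem

end SigmaG

section Slices

variable {n : ℕ} {X : Fin (n + 1) → Type u} (q : (∀ i, X i) → R) (ε : ∀ i, Sel R (X i))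

theorem mem_sigmaG_succ_of_forall_slice [∀ j, Nonempty (X j)] (j : Fin n) (σj : Strat X j.succ)
    (h : ∀ a, (fun w => σj (PartialPlay.cons a w)) ∈
      SigmaG (fun e => q (Fin.cons a e)) (fun l => ε l.succ) j) :
    σj ∈ SigmaG q ε j.succ := by
  induction j using WellFoundedGT.induction with
  | ind j ih =>
    choose ρ hρ using fun a => exists_sigmaG_profile (fun e => q (Fin.cons a e)) (fun l => ε l.succ)
    refine (mem_sigmaG_iff q ε).2 fun z => ?_
    set a := z 0 (Nat.succ_pos j)
    obtain ⟨τ, hτ, hz⟩ := (mem_sigmaG_iff _ _).1 (h a) z.tail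
    classical
    refine ⟨consProfile a (Function.update ρ a τ), fun l hl => ?_, ?_⟩
    · cases l using Fin.cases with
      | zero => exact absurd hl (Fin.not_lt_zero _)
      | succ l =>
        refine ih l (Fin.succ_lt_succ_iff.1 hl) _ fun a' => ?_
        rcases eq_or_ne a' a with rfl | ha'
        · simp only [consProfile_succ_cons, Function.update_self]
          exact hτ l (Fin.succ_lt_succ_iff.1 hl)
        · simp only [consProfile_succ_cons, Function.update_of_ne ha']
          exact hρ a' l
    · have hext : ∀ y, stratExt (consProfile a (Function.update ρ a τ)) (j.succ + 1) (z.snoc y) =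
          Fin.cons a (stratExt τ (j + 1) (z.tail.snoc y)) := by
        intro y
        have hy0 : ∀ h, z.snoc y 0 h = a := fun h => PartialPlay.snoc_of_lt z y h (Nat.succ_pos j)
        rw [stratExt_consProfile _ _ _ hy0, PartialPlay.tail_snoc, Function.update_self]
        rfl
      simp_rw [hext]
      rwa [← PartialPlay.cons_tail z]

end Slices

theorem mem_bigProd_zero {X : Fin 1 → Type u} (ε : ∀ i, Sel R (X i)) (q : (∀ i, X i) → R)
    (x : ∀ i, X i) : x ∈ (bigProd ε).fn q ↔ x 0 ∈ (ε 0).fn fun a => q (oneEquiv X a) :=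
  Sel.mem_comap

theorem mem_bigProd_succ {n : ℕ} {X : Fin (n + 2) → Type u} (ε : ∀ i, Sel R (X i))
    (q : (∀ i, X i) → R) (x : ∀ i, X i) :
    x ∈ (bigProd ε).fn q ↔
      x 0 ∈ (ε 0).fn (fun a =>
        ((bigProd fun j => ε j.succ).fn fun e => q (Fin.cons a e)).sup'
          ((bigProd fun j => ε j.succ).ne _) fun e => q (Fin.cons a e)) ∧
      Fin.tail x ∈ (bigProd fun j => ε j.succ).fn fun e => q (Fin.cons (x 0) e) :=
  Sel.mem_comap.trans Sel.mem_prod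

theorem oneEquiv_eq_cons {X : Fin 1 → Type u} (a : X 0) (e : ∀ j : Fin 0, X j.succ) :
    oneEquiv X a = Fin.cons a e :=
  funext fun i => Fin.cases rfl (fun j => j.elim0) i

theorem isSigmaPlay_fin_zero {X : Fin 0 → Type u} (q : (∀ i, X i) → R)
    (ε : ∀ i, Sel R (X i)) (x : ∀ i, X i) : IsSigmaPlay q ε x :=
  ⟨fun i => i.elim0, fun i => i.elim0, funext fun i => i.elim0⟩

section Forward

variable {n : ℕ} {X : Fin (n + 1) → Type u} (q : (∀ i, X i) → R) (ε : ∀ i, Sel R (X i))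

theorem consProfile_mem_sigmaG_succ [∀ j, Nonempty (X j)] (a : X 0)
    {τ : X 0 → ∀ j, Strat (fun j : Fin n => X j.succ) j}
    (hτ : ∀ a' j, τ a' j ∈ SigmaG (fun e => q (Fin.cons a' e)) (fun l => ε l.succ) j) (j : Fin n) :
    consProfile a τ j.succ ∈ SigmaG q ε j.succ :=
  mem_sigmaG_succ_of_forall_slice q ε j _ fun a' => hτ a' j

theorem isSigmaPlay_cons {a : X 0} {b : ∀ j : Fin n, X j.succ} (T : X 0 → ∀ j : Fin n, X j.succ)
    (ha : a ∈ (ε 0).fn fun a' => q (Fin.cons a' (T a')))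
    (hT : ∀ a', IsSigmaPlay (fun e => q (Fin.cons a' e)) (fun l => ε l.succ) (T a'))
    (hb : IsSigmaPlay (fun e => q (Fin.cons a e)) (fun l => ε l.succ) b) :
    IsSigmaPlay q ε (Fin.cons a b) := by
  have : ∀ j, Nonempty (X j) := Fin.cases ⟨a⟩ fun j => ⟨b j⟩
  choose σT hσT hTplay using hT
  obtain ⟨σb, hσb, rfl⟩ := hb
  classical
  refine ⟨consProfile a (Function.update σT a σb), fun l => ?_, ?_⟩
  · cases l using Fin.cases with
    | zero =>
      -- Round 0 is checked against the continuation `σT`, not against the profile itself, which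
      -- follows `b` rather than `T a` after `a`.
      refine (mem_sigmaG_iff q ε).2 fun z => ⟨consProfile a σT, fun l hl => ?_, ?_⟩
      · cases l using Fin.cases with
        | zero => exact absurd hl (lt_irrefl _)
        | succ l => exact consProfile_mem_sigmaG_succ q ε a hσT l
      · have hext : ∀ y, stratExt (consProfile a σT) ((0 : Fin (n + 1)) + 1) (z.snoc y) =
            Fin.cons y (T y) := by
          intro y
          rw [stratExt_consProfile _ _ _ (PartialPlay.snoc_self z y)]
          exact congrArg (Fin.cons y) ((stratExt_zero _ _).trans (hTplay y).symm)
        simp only [hext]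
        exact ha
    | succ l =>
      refine consProfile_mem_sigmaG_succ q ε a (fun a' j => ?_) l
      rcases eq_or_ne a' a with rfl | ha'
      · simpa using hσb j
      · simpa [ha'] using hσT a' j
  · rw [stratPlay_consProfile, Function.update_self]

end Forward

theorem isSigmaPlay_of_mem_bigProd {n : ℕ} {X : Fin (n + 1) → Type u} (ε : ∀ i, Sel R (X i))
    (hε : ∀ j : Fin (n + 1), (j : ℕ) < n → Witnessing (ε j)) (q : (∀ i, X i) → R)
    (x : ∀ i, X i) (hx : x ∈ (bigProd ε).fn q) : IsSigmaPlay q ε x := by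
  induction n with
  | zero =>
    rw [mem_bigProd_zero] at hx
    rw [← Fin.cons_self_tail x]
    refine isSigmaPlay_cons q ε (fun _ => Fin.tail x) ?_ (fun _ => isSigmaPlay_fin_zero _ _ _)
      (isSigmaPlay_fin_zero _ _ _)
    simpa only [oneEquiv_eq_cons _ (Fin.tail x)] using hx
  | succ n ih =>
    obtain ⟨h0, htail⟩ := (mem_bigProd_succ ε q x).1 hx
    obtain ⟨T, hT, hT0⟩ := (hε 0 (Nat.succ_pos n)).exists_mem_of_mem_sup' _ _ _ h0
    have hε' : ∀ j : Fin (n + 1), (j : ℕ) < n → Witnessing (ε j.succ) :=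
      fun j hj => hε j.succ (Nat.succ_lt_succ hj)
    rw [← Fin.cons_self_tail x]
    exact isSigmaPlay_cons q ε T hT0 (fun a => ih _ hε' _ _ (hT a)) (ih _ hε' _ _ htail)

theorem exists_mem_bigProd_last_eq {n : ℕ} {X : Fin (n + 1) → Type u} (ε : ∀ i, Sel R (X i))
    (hlast : ∀ k y, y ∈ (ε (Fin.last n)).fn k) (q : (∀ i, X i) → R) (y : X (Fin.last n)) :
    ∃ z ∈ (bigProd ε).fn q, z (Fin.last n) = y := by
  induction n with
  | zero => exact ⟨oneEquiv X y, (mem_bigProd_zero ε q _).2 (hlast _ y), rfl⟩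
  | succ n ih =>
    obtain ⟨a, ha⟩ := (ε 0).ne fun a =>
      ((bigProd fun j => ε j.succ).fn fun e => q (Fin.cons a e)).sup'
        ((bigProd fun j => ε j.succ).ne _) fun e => q (Fin.cons a e)
    obtain ⟨e, he, hey⟩ := ih (fun j => ε j.succ) hlast (fun e => q (Fin.cons a e)) y
    exact ⟨Fin.cons a e, (mem_bigProd_succ ε q _).2 ⟨ha, by simpa using he⟩, hey⟩

theorem exists_mem_bigProd_apply_eq {n : ℕ} {X : Fin (n + 1) → Type u} (ε : ∀ i, Sel R (X i))
    (hlast : ∀ k y, y ∈ (ε (Fin.last n)).fn k) {i : Fin (n + 1)} (hi : (i : ℕ) < n)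
    (f : X i → X (Fin.last n) → R) {C : X i → R} (hC : ∀ a, IsLUB (Set.range (f a)) (C a))
    {x : X i} (hx : x ∈ (ε i).fn C) :
    ∃ z ∈ (bigProd ε).fn fun z => f (z i) (z (Fin.last n)), z i = x := by
  induction n with
  | zero => exact absurd hi (Nat.not_lt_zero _)
  | succ n ih =>
    cases i using Fin.cases with
    | zero =>
      have hsup : ∀ a, ((bigProd fun j => ε j.succ).fn fun e => f a (e (Fin.last n))).sup'
          ((bigProd fun j => ε j.succ).ne _) (fun e => f a (e (Fin.last n))) = C a := by
        intro a
        refine IsLUB.unique (s := Set.range (f a))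
          ⟨?_, fun b hb => Finset.sup'_le _ _ fun e _ => hb ⟨_, rfl⟩⟩ (hC a)
        rintro _ ⟨y, rfl⟩
        obtain ⟨e, he, rfl⟩ := exists_mem_bigProd_last_eq (fun j => ε j.succ) hlast
          (fun e => f a (e (Fin.last n))) y
        exact Finset.le_sup' (fun e => f a (e (Fin.last n))) he
      obtain ⟨e, he⟩ := (bigProd fun j => ε j.succ).ne fun e => f x (e (Fin.last n))
      refine ⟨Fin.cons x e, (mem_bigProd_succ ε _ _).2 ⟨?_, by simpa using he⟩, rfl⟩
      simpa [hsup] using hx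
    | succ i =>
      obtain ⟨a, ha⟩ := (ε 0).ne fun a =>
        ((bigProd fun j => ε j.succ).fn fun e => f (e i) (e (Fin.last n))).sup'
          ((bigProd fun j => ε j.succ).ne _) fun e => f (e i) (e (Fin.last n))
      obtain ⟨e, he, rfl⟩ := ih (fun j => ε j.succ) hlast (Nat.lt_of_succ_lt_succ hi) f hC hx
      exact ⟨Fin.cons a e, (mem_bigProd_succ ε _ _).2 ⟨ha, by simpa using he⟩, rfl⟩

theorem isLUB_range_choice {A Y : Type u} (I : A → Finset (A → R)) (hI : ∀ a, (I a).Nonempty)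
    (g : Y → ∀ a, I a) (hg : Function.Surjective g) (a : A) :
    IsLUB (Set.range fun y => (g y a).val a) ((I a).sup' (hI a) fun P => P a) := by
  refine ⟨?_, fun b hb => Finset.sup'_le _ _ fun P hP => ?_⟩
  · rintro _ ⟨y, rfl⟩
    exact Finset.le_sup' (fun P => P a) (g y a).prop
  · classical
    obtain ⟨y, hy⟩ :=
      hg (Function.update (fun a' => (⟨_, (hI a').choose_spec⟩ : I a')) a (⟨P, hP⟩ : I a))
    exact hb ⟨y, by simp [hy]⟩

theorem exists_choice_of_forall_isSigmaPlay {n : ℕ} {X : Fin (n + 1) → Type u}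
    (ε : ∀ i, Sel R (X i)) {i : Fin (n + 1)} (hi : (i : ℕ) < n) {A : Type u} (εA : Sel R A)
    (c : A ≃ X i) (hεi : ε i = εA.comap c) (I : A → Finset (A → R)) (hI : ∀ a, (I a).Nonempty)
    (g : X (Fin.last n) → ∀ a, I a) (hg : Function.Surjective g)
    (hlast : ∀ k y, y ∈ (ε (Fin.last n)).fn k)
    (H : ∀ q x, x ∈ (bigProd ε).fn q → IsSigmaPlay q ε x) {x : A}
    (hx : x ∈ εA.fn fun a => (I a).sup' (hI a) fun P => P a) :
    ∃ p : A → A → R, (∀ a, p a ∈ I a) ∧ x ∈ εA.fn fun a => p a a := by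
  let f : X i → X (Fin.last n) → R := fun b y => (g y (c.symm b)).val (c.symm b)
  obtain ⟨z, hz, hzi⟩ := exists_mem_bigProd_apply_eq ε hlast hi f
    (fun b => isLUB_range_choice I hI g hg (c.symm b)) (x := c x) (by simpa [hεi, Sel.mem_comap])
  obtain ⟨σ, hσ, rfl⟩ := H _ z hz
  let h : PartialPlay X i := fun j _ => stratPlay σ j
  obtain ⟨σ', -, hσ'⟩ := (mem_sigmaG_iff _ ε).1 (hσ i) h
  have hσi : σ i h = c x := (stratPlay_apply σ i).symm.trans hzi
  rw [hσi, hεi, Sel.mem_comap] at hσ'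
  let w : A → X (Fin.last n) := fun a => stratExt σ' (i + 1) (h.snoc (c a)) (Fin.last n)
  refine ⟨fun a => (g (w a) a).val, fun a => (g (w a) a).prop, ?_⟩
  have hround : ∀ a, stratExt σ' (i + 1) (h.snoc (c a)) i = c a := fun a =>
    (stratExt_of_lt _ _ (Nat.lt_succ_self i)).trans (PartialPlay.snoc_self h _ _)
  have hsymm : ∀ y a, (g y (c.symm (c a))).val = (g y a).val := fun y a => by
    rw [Equiv.symm_apply_apply]
  simpa only [hround, hsymm, Equiv.symm_apply_apply, f] using hσ'

theorem snocTypes_castSucc {m : ℕ} (X : Fin m → Type u) (Y : Type u) (i : Fin m) :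
    snocTypes X Y i.castSucc = X i :=
  Fin.snoc_castSucc (α := fun _ => Type u) Y X i

theorem snocTypes_last {m : ℕ} (X : Fin m → Type u) (Y : Type u) :
    snocTypes X Y (Fin.last m) = Y :=
  Fin.snoc_last (α := fun _ => Type u) Y X

theorem snocSel_castSucc {m : ℕ} {X : Fin m → Type u} {Y : Type u} (ε : ∀ i, Sel R (X i))
    (δ : Sel R Y) (i : Fin m) :
    snocSel ε δ i.castSucc = (ε i).comap (Equiv.cast (snocTypes_castSucc X Y i).symm) := by
  rw [snocSel, Fin.lastCases_castSucc]
  exact Sel.cast_eq_comap _ _ _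

theorem snocSel_last {m : ℕ} {X : Fin m → Type u} {Y : Type u} (ε : ∀ i, Sel R (X i))
    (δ : Sel R Y) :
    snocSel ε δ (Fin.last m) = δ.comap (Equiv.cast (snocTypes_last X Y).symm) := by
  rw [snocSel, Fin.lastCases_last]
  exact Sel.cast_eq_comap _ _ _

theorem witnessing_iff_bigProd_subset_sigmaPlays_general {R : Type u} [SemilatticeSup R]
    {m : ℕ} {X : Fin m → Type u}
    [∀ i, Fintype (X i)]
    (ε : ∀ i, Sel R (X i)) :
    (∀ i, Witnessing (ε i)) ↔
      ∀ (Y : Type u), Fintype Y → Nonempty Y →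
        ∀ (δ : Sel R Y) (q : (∀ i, snocTypes X Y i) → R)
          (x : ∀ i, snocTypes X Y i),
          x ∈ (bigProd (snocSel ε δ)).fn q → IsSigmaPlay q (snocSel ε δ) x := by
  constructor
  · intro hε Y _ _ δ q x hx
    refine isSigmaPlay_of_mem_bigProd _ (fun j hj => ?_) q x hx
    rw [← Fin.castSucc_castLT j hj, snocSel_castSucc]
    exact (hε _).comap _
  · intro H i I hI x hx
    classical
    let Y := ∀ a, I a
    have : Nonempty Y := ⟨fun a => ⟨_, (hI a).choose_spec⟩⟩
    let δ : Sel R Y := Sel.univ Y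
    refine exists_choice_of_forall_isSigmaPlay (snocSel ε δ) (i := i.castSucc) i.isLt (ε i) _
      (snocSel_castSucc ε δ i) I hI _ (Equiv.cast (snocTypes_last X Y)).surjective (fun k y => ?_)
      (H Y inferInstance inferInstance δ) hx
    rw [snocSel_last, Sel.mem_comap]
    exact Finset.mem_univ _

/-- `ε_i` (for the non-final rounds `i`) are all witnessing iff for every choice of
final-round move type `Xₙ`, selection function `εₙ` and outcome function `q`, every
play in the `(m+1)`-fold product of selection functions on `q` is a `Σ(G)` play of
the resulting game `G`. -/
theorem witnessing_iff_bigProd_subset_sigmaPlays {R : Type u} [SemilatticeSup R]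
    [Nontrivial R] {m : ℕ} {X : Fin m → Type u}
    [∀ i, Fintype (X i)] [∀ i, Nonempty (X i)]
    (ε : ∀ i, Sel R (X i)) :
    (∀ i, Witnessing (ε i)) ↔
      ∀ (Y : Type u), Fintype Y → Nonempty Y →
        ∀ (δ : Sel R Y) (q : (∀ i, snocTypes X Y i) → R)
          (x : ∀ i, snocTypes X Y i),
          x ∈ (bigProd (snocSel ε δ)).fn q → IsSigmaPlay q (snocSel ε δ) x :=
  witnessing_iff_bigProd_subset_sigmaPlays_general ε
end
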